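/- In the Lie algebra sl(3,ℝ) of traceless 3×3 real matrices with bracket [A,B] = AB − BA, consider the basis e₁ = diag(2,−1,−1), e₂ = E₁₂−E₂₁, e₃ = E₁₃−E₃₁, e₄ = E₁₂+E₂₁, e₅ = E₁₃+E₃₁, e₆ = diag(0,−1,1), e₇ = E₂₃+E₃₂, e₈ = E₂₃−E₃₂ (where E_{ij} is the matrix with 1 in entry (i,j) and 0 elsewhere). Set 𝔥 = span(e₈), 𝔪 = span(e₁,…,e₇), and let π : sl(3,ℝ) → 𝔪 be the projection along 𝔥. Identify 𝔪 with ℝ⁷ via the basis e₁,…,e₇ and let φ = a₁·e^{123} + a₂·e^{145} + a₃·e^{167} + a₄·(e^{124}+e^{135}) + a₅·(e^{125}−e^{134}) + a₆·(e^{246}−e^{257}−e^{347}−e^{356}) + a₇·(e^{247}+e^{256}+e^{346}−e^{357}). Then the Koszul differential satisfies dφ(e₃,e₅,e₆,e₇) = −a₃. Consequently, if dφ(e₃,e₅,e₆,e₇) = 0, then (ι_{e₇}φ) ∧ (ι_{e₇}φ) ∧ φ = 0 and φ is not definite. -/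

import Mathlib

/-!
Of the six terms of `dφ(e₃,e₅,e₆,e₇)`, the brackets `[e₃,e₅] = e₁ − e₆`, `[e₃,e₆] = e₅`,
`[e₃,e₇] = e₄`, `[e₅,e₆] = e₃`, `[e₅,e₇] = e₂`, `[e₆,e₇] = −2e₈ ∈ 𝔥` leave only
`−φ(e₁, e₆, e₇) = −a₃`: every other term repeats a vector, evaluates `φ` on a triple of indices
absent from it, or involves `π[e₆,e₇] = 0`.

Contracting with `e₇` gives `ι_{e₇}φ = a₃e^{16} − a₆(e^{25} + e^{34}) + a₇(e^{24} − e^{35})`.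
When `a₃ = 0` this lies in `Λ²⟨e²,…,e⁵⟩`, so its square is a multiple of `e^{2345}`, while every
term of `φ` then contains one of `e²,…,e⁵`; hence `(ι_{e₇}φ)² ∧ φ = 0`. All forms are handled as
minor determinants, whose wedge products concatenate index lists and vanish on repeated indices.
-/
open AlternatingMap

/-- `ℝ⁷`. -/
abbrev V7 : Type := Fin 7 → ℝ

/-- Wedge product of real-valued alternating forms on `V7`. -/
noncomputable def wedge {m n : ℕ} (φ : V7 [⋀^Fin m]→ₗ[ℝ] ℝ) (ψ : V7 [⋀^Fin n]→ₗ[ℝ] ℝ) :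
    V7 [⋀^Fin (m + n)]→ₗ[ℝ] ℝ :=
  ((TensorProduct.lid ℝ ℝ).toLinearMap.compAlternatingMap (φ.domCoprod ψ)).domDomCongr
    finSumFinEquiv

/-- The dual basis covector `eⁱ` (1-indexed: `i = 1, …, 7`) as a 1-form on `ℝ⁷`. -/
noncomputable def eF (i : ℕ) : V7 [⋀^Fin 1]→ₗ[ℝ] ℝ :=
  AlternatingMap.ofSubsingleton ℝ V7 ℝ (0 : Fin 1) (LinearMap.proj (Fin.ofNat 7 (i - 1 : ℕ)))

/-- `e^{ij} := eⁱ ∧ eʲ` (1-indexed). -/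
noncomputable def eW2 (i j : ℕ) : V7 [⋀^Fin 2]→ₗ[ℝ] ℝ := wedge (eF i) (eF j)

/-- `e^{ijk} := eⁱ ∧ eʲ ∧ eᵏ` (1-indexed). -/
noncomputable def eW3 (i j k : ℕ) : V7 [⋀^Fin 3]→ₗ[ℝ] ℝ := wedge (wedge (eF i) (eF j)) (eF k)

/-- The volume form `e^{1234567} = e¹∧e²∧e³∧e⁴∧e⁵∧e⁶∧e⁷`. -/
noncomputable def vol7 : V7 [⋀^Fin 7]→ₗ[ℝ] ℝ :=
  wedge (wedge (wedge (wedge (wedge (wedge (eF 1) (eF 2)) (eF 3)) (eF 4)) (eF 5)) (eF 6)) (eF 7)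

/-- The standard basis vector `eᵢ` of `ℝ⁷` (1-indexed: `i = 1, …, 7`). -/
noncomputable def bV (i : ℕ) : V7 := Pi.single (Fin.ofNat 7 (i - 1 : ℕ)) 1

/-- Interior product `ι_v φ` of a vector with a 3-form: `(x, y) ↦ φ (v, x, y)`. -/
noncomputable def iprod (v : V7) (φ : V7 [⋀^Fin 3]→ₗ[ℝ] ℝ) : V7 [⋀^Fin 2]→ₗ[ℝ] ℝ :=
  φ.curryLeft v

/-- The 7-form `(ι_v φ) ∧ (ι_v φ) ∧ φ`. -/
noncomputable def G2vol (v : V7) (φ : V7 [⋀^Fin 3]→ₗ[ℝ] ℝ) : V7 [⋀^Fin 7]→ₗ[ℝ] ℝ :=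
  wedge (wedge (iprod v φ) (iprod v φ)) φ

/-- A 3-form on `ℝ⁷` is definite if `(ι_vφ)∧(ι_vφ)∧φ ≠ 0` for every nonzero `v`. -/
def IsDefinite (φ : V7 [⋀^Fin 3]→ₗ[ℝ] ℝ) : Prop :=
  ∀ v : V7, v ≠ 0 → G2vol v φ ≠ 0

/-- The Koszul (Chevalley–Eilenberg) differential of a 3-form `φ` on `𝔪 ≅ ℝ⁷`, where
`c` is the projection `π` onto `𝔪` along `𝔥` followed by the identification `𝔪 ≅ ℝ⁷`:
`dφ(X₀,X₁,X₂,X₃) = Σ_{i<j} (−1)^{i+j} φ(π([Xᵢ,Xⱼ]), Xₖ, Xₗ)`. -/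
noncomputable def koszul {n : ℕ} (c : Matrix (Fin n) (Fin n) ℝ →ₗ[ℝ] V7)
    (φ : V7 [⋀^Fin 3]→ₗ[ℝ] ℝ) (X₀ X₁ X₂ X₃ : Matrix (Fin n) (Fin n) ℝ) : ℝ :=
  -φ ![c (X₀ * X₁ - X₁ * X₀), c X₂, c X₃] + φ ![c (X₀ * X₂ - X₂ * X₀), c X₁, c X₃]
    - φ ![c (X₀ * X₃ - X₃ * X₀), c X₁, c X₂] - φ ![c (X₁ * X₂ - X₂ * X₁), c X₀, c X₃]
    + φ ![c (X₁ * X₃ - X₃ * X₁), c X₀, c X₂] - φ ![c (X₂ * X₃ - X₃ * X₂), c X₀, c X₁]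

section Alternatization

variable {R : Type*} [CommRing R] {ι : Type*} [DecidableEq ι] [Fintype ι]
  {M M₂ N : Type*} [AddCommGroup M] [Module R M] [AddCommGroup M₂] [Module R M₂]
  [AddCommGroup N] [Module R N]

theorem MultilinearMap.alternatization_compLinearMap (f : MultilinearMap R (fun _ : ι => M) N)
    (g : M₂ →ₗ[R] M) :
    (MultilinearMap.alternatization f).compLinearMap g
      = MultilinearMap.alternatization (f.compLinearMap fun _ => g) := by
  ext v
  simp [MultilinearMap.alternatization_apply]

theorem MultilinearMap.alternatization_domDomCongr {ι' : Type*} [DecidableEq ι'] [Fintype ι']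
    (e : ι ≃ ι') (f : MultilinearMap R (fun _ : ι => M) N) :
    (MultilinearMap.alternatization f).domDomCongr e
      = MultilinearMap.alternatization (f.domDomCongr e) := by
  ext v
  simp only [AlternatingMap.domDomCongr_apply, MultilinearMap.alternatization_apply]
  refine Fintype.sum_equiv e.permCongr _ _ fun σ => ?_
  simp [Equiv.Perm.sign_permCongr, MultilinearMap.domDomCongr_apply, Equiv.permCongr_apply]

end Alternatization

noncomputable def wedgeₗ {m n : ℕ} :
    (V7 [⋀^Fin m]→ₗ[ℝ] ℝ) →ₗ[ℝ] (V7 [⋀^Fin n]→ₗ[ℝ] ℝ) →ₗ[ℝ] V7 [⋀^Fin (m + n)]→ₗ[ℝ] ℝ :=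
  (TensorProduct.mk ℝ _ _).compr₂ <| (domDomCongrₗ ℝ finSumFinEquiv).toLinearMap ∘ₗ
      (TensorProduct.lid ℝ ℝ).toLinearMap.compAlternatingMapₗ ℝ ∘ₗ domCoprod'

theorem wedgeₗ_apply {m n : ℕ} (φ : V7 [⋀^Fin m]→ₗ[ℝ] ℝ) (ψ : V7 [⋀^Fin n]→ₗ[ℝ] ℝ) :
    wedgeₗ φ ψ = wedge φ ψ :=
  rfl

/-- `minorForm p = e^{p 0} ∧ ⋯ ∧ e^{p (k-1)}`, with 0-based indices. -/
noncomputable def minorForm {k : ℕ} (p : Fin k → Fin 7) : V7 [⋀^Fin k]→ₗ[ℝ] ℝ :=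
  Matrix.detRowAlternating.compLinearMap (LinearMap.funLeft ℝ ℝ p)

theorem minorForm_apply {k : ℕ} (p : Fin k → Fin 7) (v : Fin k → V7) :
    minorForm p v = (Matrix.of fun i j => v i (p j)).det :=
  rfl

noncomputable def coordProd {k : ℕ} (p : Fin k → Fin 7) :
    MultilinearMap ℝ (fun _ : Fin k => V7) ℝ :=
  (MultilinearMap.mkPiAlgebra ℝ (Fin k) ℝ).compLinearMap fun i => LinearMap.proj (p i)

theorem coordProd_apply {k : ℕ} (p : Fin k → Fin 7) (v : Fin k → V7) :
    coordProd p v = ∏ i, v i (p i) := by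
  simp [coordProd]

theorem minorForm_eq_alternatization {k : ℕ} (p : Fin k → Fin 7) :
    minorForm p = MultilinearMap.alternatization (coordProd p) := by
  rw [minorForm, Matrix.detRowAlternating, MultilinearMap.alternatization_compLinearMap]
  rfl

theorem wedge_minorForm {m n : ℕ} (p : Fin m → Fin 7) (q : Fin n → Fin 7) :
    wedge (minorForm p) (minorForm q) = minorForm (Fin.append p q) := by
  rw [wedge, minorForm_eq_alternatization p, minorForm_eq_alternatization q,
    ← MultilinearMap.domCoprod_alternization, ← LinearMap.compMultilinearMap_alternatization,
    MultilinearMap.alternatization_domDomCongr, minorForm_eq_alternatization]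
  congr 1
  refine MultilinearMap.ext fun v => ?_
  simp only [MultilinearMap.domDomCongr_apply, LinearMap.compMultilinearMap_apply,
    MultilinearMap.domCoprod_apply, LinearEquiv.coe_coe, TensorProduct.lid_tmul,
    coordProd_apply, smul_eq_mul, Fin.prod_univ_add, finSumFinEquiv_apply_left,
    finSumFinEquiv_apply_right, Fin.append_left, Fin.append_right]

theorem minorForm_eq_zero_of_not_injective {k : ℕ} {p : Fin k → Fin 7}
    (hp : ¬ Function.Injective p) : minorForm p = 0 := by
  obtain ⟨i, j, hij, hne⟩ := Function.not_injective_iff.mp hp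
  ext v
  rw [minorForm_apply, AlternatingMap.zero_apply]
  exact Matrix.det_zero_of_column_eq hne fun l => by simp only [Matrix.of_apply, hij]

theorem eF_eq_minorForm (i : ℕ) : eF i = minorForm ![Fin.ofNat 7 (i - 1)] := by
  ext v
  simp [eF, minorForm_apply]

theorem eW3_eq_minorForm (i j k : ℕ) :
    eW3 i j k = minorForm ![Fin.ofNat 7 (i - 1), Fin.ofNat 7 (j - 1), Fin.ofNat 7 (k - 1)] := by
  rw [eW3, eF_eq_minorForm, eF_eq_minorForm, eF_eq_minorForm, wedge_minorForm, wedge_minorForm]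
  congr 1
  ext l
  fin_cases l <;> rfl

theorem bV_ne_zero (i : ℕ) : bV i ≠ 0 :=
  Pi.single_ne_zero_iff.mpr one_ne_zero

noncomputable def sl3Form (a₁ a₂ a₃ a₄ a₅ a₆ a₇ : ℝ) : V7 [⋀^Fin 3]→ₗ[ℝ] ℝ :=
  a₁ • eW3 1 2 3 + a₂ • eW3 1 4 5 + a₃ • eW3 1 6 7
    + a₄ • (eW3 1 2 4 + eW3 1 3 5) + a₅ • (eW3 1 2 5 - eW3 1 3 4)
    + a₆ • (eW3 2 4 6 - eW3 2 5 7 - eW3 3 4 7 - eW3 3 5 6)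
    + a₇ • (eW3 2 4 7 + eW3 2 5 6 + eW3 3 4 6 - eW3 3 5 7)

theorem sl3Form_eq_minorForm (a₁ a₂ a₃ a₄ a₅ a₆ a₇ : ℝ) :
    sl3Form a₁ a₂ a₃ a₄ a₅ a₆ a₇ =
      a₁ • minorForm ![0, 1, 2] + a₂ • minorForm ![0, 3, 4] + a₃ • minorForm ![0, 5, 6]
        + a₄ • (minorForm ![0, 1, 3] + minorForm ![0, 2, 4])
        + a₅ • (minorForm ![0, 1, 4] - minorForm ![0, 2, 3])
        + a₆ • (minorForm ![1, 3, 5] - minorForm ![1, 4, 6] - minorForm ![2, 3, 6]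
          - minorForm ![2, 4, 5])
        + a₇ • (minorForm ![1, 3, 6] + minorForm ![1, 4, 5] + minorForm ![2, 3, 5]
          - minorForm ![2, 4, 6]) := by
  simp only [sl3Form, eW3_eq_minorForm]
  rfl

theorem iprod_bV_seven_sl3Form (a₁ a₂ a₃ a₄ a₅ a₆ a₇ : ℝ) :
    iprod (bV 7) (sl3Form a₁ a₂ a₃ a₄ a₅ a₆ a₇) =
      a₃ • minorForm ![0, 5] - a₆ • (minorForm ![1, 4] + minorForm ![2, 3])
        + a₇ • (minorForm ![1, 3] - minorForm ![2, 4]) := by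
  rw [sl3Form_eq_minorForm]
  ext v
  simp only [iprod, curryLeft_add, curryLeft_smul, curryLeft_apply_apply, AlternatingMap.add_apply,
    AlternatingMap.sub_apply, AlternatingMap.smul_apply, LinearMap.add_apply, LinearMap.smul_apply,
    minorForm_apply, Matrix.det_fin_three, Matrix.det_fin_two, Matrix.of_apply, Matrix.cons_val',
    Matrix.cons_val_zero, Matrix.cons_val_one, Matrix.cons_val, Matrix.cons_val_fin_one, bV,
    Pi.single_apply, Nat.reduceSub, Fin.ofNat_eq_cast, Nat.cast_ofNat, Fin.reduceEq, ↓reduceIte,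
    smul_eq_mul]
  ring

set_option maxRecDepth 2000 in
theorem G2vol_bV_seven_sl3Form (a₁ a₂ a₄ a₅ a₆ a₇ : ℝ) :
    G2vol (bV 7) (sl3Form a₁ a₂ 0 a₄ a₅ a₆ a₇) = 0 := by
  rw [G2vol, iprod_bV_seven_sl3Form, sl3Form_eq_minorForm]
  simp only [← wedgeₗ_apply]
  simp (disch := decide) only [map_add, map_sub, map_neg, map_smul, _root_.map_zero,
    LinearMap.add_apply, LinearMap.sub_apply, LinearMap.neg_apply, LinearMap.smul_apply,
    LinearMap.zero_apply, wedgeₗ_apply, wedge_minorForm, minorForm_eq_zero_of_not_injective,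
    zero_smul, smul_zero, add_zero, sub_zero, zero_sub, neg_zero]

theorem koszul_sl3Form_of_brackets {n : ℕ} (a₁ a₂ a₃ a₄ a₅ a₆ a₇ : ℝ)
    (c : Matrix (Fin n) (Fin n) ℝ →ₗ[ℝ] V7) {X₁ X₂ X₃ X₄ X₅ X₆ X₇ X₈ : Matrix (Fin n) (Fin n) ℝ}
    (hc₁ : c X₁ = bV 1) (hc₂ : c X₂ = bV 2) (hc₃ : c X₃ = bV 3) (hc₄ : c X₄ = bV 4)
    (hc₅ : c X₅ = bV 5) (hc₆ : c X₆ = bV 6) (hc₇ : c X₇ = bV 7) (hc₈ : c X₈ = 0)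
    (h₃₅ : X₃ * X₅ - X₅ * X₃ = X₁ - X₆) (h₃₆ : X₃ * X₆ - X₆ * X₃ = X₅)
    (h₃₇ : X₃ * X₇ - X₇ * X₃ = X₄) (h₅₆ : X₅ * X₆ - X₆ * X₅ = X₃)
    (h₅₇ : X₅ * X₇ - X₇ * X₅ = X₂) (h₆₇ : X₆ * X₇ - X₇ * X₆ = (-2 : ℝ) • X₈) :
    koszul c (sl3Form a₁ a₂ a₃ a₄ a₅ a₆ a₇) X₃ X₅ X₆ X₇ = -a₃ := by
  rw [koszul, h₃₅, h₃₆, h₃₇, h₅₆, h₅₇, h₆₇, map_sub, map_smul, hc₁, hc₂, hc₃, hc₄, hc₅, hc₆, hc₇,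
    hc₈, smul_zero, sl3Form_eq_minorForm]
  simp +decide [minorForm_apply, Matrix.det_fin_three, bV, Pi.single_apply]

/-- In `sl(3,ℝ)` with the indicated basis `e₁,…,e₈`, `𝔥 = span(e₈)`, `𝔪 = span(e₁,…,e₇)`
identified with `ℝ⁷`, the Koszul differential of the generic invariant 3-form `φ`
satisfies `dφ(e₃,e₅,e₆,e₇) = −a₃`; consequently, if `dφ(e₃,e₅,e₆,e₇) = 0` then
`(ι_{e₇}φ)∧(ι_{e₇}φ)∧φ = 0` and `φ` is not definite. -/
theorem stmt9 (a₁ a₂ a₃ a₄ a₅ a₆ a₇ : ℝ)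
    (m₁ m₂ m₃ m₄ m₅ m₆ m₇ m₈ : Matrix (Fin 3) (Fin 3) ℝ)
    (hm₁ : m₁ = !![2, 0, 0; 0, -1, 0; 0, 0, -1])
    (hm₂ : m₂ = !![0, 1, 0; -1, 0, 0; 0, 0, 0])
    (hm₃ : m₃ = !![0, 0, 1; 0, 0, 0; -1, 0, 0])
    (hm₄ : m₄ = !![0, 1, 0; 1, 0, 0; 0, 0, 0])
    (hm₅ : m₅ = !![0, 0, 1; 0, 0, 0; 1, 0, 0])
    (hm₆ : m₆ = !![0, 0, 0; 0, -1, 0; 0, 0, 1])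
    (hm₇ : m₇ = !![0, 0, 0; 0, 0, 1; 0, 1, 0])
    (hm₈ : m₈ = !![0, 0, 0; 0, 0, 1; 0, -1, 0])
    -- `c` is the projection onto `𝔪 = span(e₁,…,e₇)` along `𝔥 = span(e₈)`, followed by
    -- the identification of `𝔪` with `ℝ⁷` via the basis `e₁,…,e₇`:
    (c : Matrix (Fin 3) (Fin 3) ℝ →ₗ[ℝ] V7)
    (hc₁ : c m₁ = bV 1) (hc₂ : c m₂ = bV 2) (hc₃ : c m₃ = bV 3) (hc₄ : c m₄ = bV 4)
    (hc₅ : c m₅ = bV 5) (hc₆ : c m₆ = bV 6) (hc₇ : c m₇ = bV 7) (hc₈ : c m₈ = 0) :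
    let φ : V7 [⋀^Fin 3]→ₗ[ℝ] ℝ :=
      a₁ • eW3 1 2 3 + a₂ • eW3 1 4 5 + a₃ • eW3 1 6 7
        + a₄ • (eW3 1 2 4 + eW3 1 3 5) + a₅ • (eW3 1 2 5 - eW3 1 3 4)
        + a₆ • (eW3 2 4 6 - eW3 2 5 7 - eW3 3 4 7 - eW3 3 5 6)
        + a₇ • (eW3 2 4 7 + eW3 2 5 6 + eW3 3 4 6 - eW3 3 5 7)
    koszul c φ m₃ m₅ m₆ m₇ = -a₃ ∧
    (koszul c φ m₃ m₅ m₆ m₇ = 0 → G2vol (bV 7) φ = 0 ∧ ¬ IsDefinite φ) := by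
  intro φ
  have hd : koszul c φ m₃ m₅ m₆ m₇ = -a₃ := by
    refine koszul_sl3Form_of_brackets a₁ a₂ a₃ a₄ a₅ a₆ a₇ c hc₁ hc₂ hc₃ hc₄ hc₅ hc₆ hc₇ hc₈
      ?_ ?_ ?_ ?_ ?_ ?_ <;>
    · subst hm₁ hm₂ hm₃ hm₄ hm₅ hm₆ hm₇ hm₈
      ext i j
      fin_cases i <;> fin_cases j <;> norm_num [Matrix.mul_apply, Fin.sum_univ_three]
  refine ⟨hd, fun h => ?_⟩
  obtain rfl : a₃ = 0 := by linarith
  have hG : G2vol (bV 7) φ = 0 := G2vol_bV_seven_sl3Form a₁ a₂ a₄ a₅ a₆ a₇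
  exact ⟨hG, fun hφ => hφ (bV 7) (bV_ne_zero 7) hG⟩
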